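/- Let P be a pattern of length m, T a text of length n with m ≤ n ≤ (3/2)m, and k a positive integer with k ≤ m. Suppose Occ_k(P,T) ≠ ∅ and that Q is a primitive string with 1 ≤ |Q| ≤ m/(128k) and HD(P,Q^*) < 2k. Then the fragment T' := T[min Occ_k(P,T) .. m + max Occ_k(P,T)) satisfies HD(T',Q^*) < 6k, and every position in Occ_k(P,T') is a multiple of |Q|. -/

import Mathlib

/-- Hamming distance between (the length-`m` prefixes of) two strings,
given as functions `ℕ → α`. -/
def hd {α : Type*} [DecidableEq α] (m : ℕ) (X Y : ℕ → α) : ℕ :=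
  ((Finset.range m).filter fun i => X i ≠ Y i).card

/-- The (finite) set of `k`-mismatch occurrences of a pattern `P` of length `m`
in a text `T` of length `n ≥ m`. -/
def OccF {α : Type*} [DecidableEq α] (k m n : ℕ) (P T : ℕ → α) : Finset ℕ :=
  (Finset.range (n - m + 1)).filter fun i => hd m P (fun t => T (i + t)) ≤ k

/-- `HD(S, Q^*)`: Hamming distance between the length-`len` string `S`
and the infinite repetition of the length-`q` string `Q` (cut to length `len`). -/
def HDstar {α : Type*} [DecidableEq α] (len q : ℕ) (S Q : ℕ → α) : ℕ :=
  ((Finset.range len).filter fun i => S i ≠ Q (i % q)).card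

/-- A string of length `q` (given as `ℕ → α`) is primitive if it is not a power `R^e`
with integer exponent `e ≥ 2` (where `R` is necessarily its prefix of length `q/e`). -/
def Primitive {α : Type*} (q : ℕ) (Q : ℕ → α) : Prop :=
  ¬ ∃ r e : ℕ, 2 ≤ e ∧ q = e * r ∧ ∀ i < q, Q i = Q (i % r)

/-!
Write `F := Q^∞`. By the triangle inequality through `P`, every window of `T` at a
`k`-occurrence of `P` is within `3k` mismatches of `F`. If two such windows, at offsets
differing by `d`, overlap in a stretch of length `L`, then `F` and its shift by `d` disagree in
fewer than `6k` positions of that stretch. When `q ∤ d`, primitivity of `Q` forces a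
disagreement in every block of `q` consecutive positions (otherwise `gcd d q < q` would be a
period of `Q`), i.e. at least `L / q ≥ 64k` of them. So the extreme occurrences differ by a
multiple of `q`, `T'` is the union of two windows aligned with `F` (fewer than `3k + 3k`
mismatches), and then every occurrence in `T'` is aligned by the same argument with `L = m`.
-/

open Function

section Hamming

variable {α : Type*} [DecidableEq α]

theorem hd_eq_sum (m : ℕ) (X Y : ℕ → α) :
    hd m X Y = ∑ i ∈ Finset.range m, if X i ≠ Y i then 1 else 0 :=
  Finset.card_filter _ _

theorem hd_comm (m : ℕ) (X Y : ℕ → α) : hd m X Y = hd m Y X := by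
  simp only [hd, ne_comm]

theorem hd_triangle (m : ℕ) (X Y Z : ℕ → α) : hd m X Z ≤ hd m X Y + hd m Y Z := by
  simp only [hd_eq_sum, ← Finset.sum_add_distrib]
  refine Finset.sum_le_sum fun i _ => ?_
  split_ifs <;> simp_all

theorem hd_mono {m m' : ℕ} (h : m ≤ m') (X Y : ℕ → α) : hd m X Y ≤ hd m' X Y :=
  Finset.card_le_card (Finset.filter_subset_filter _ (Finset.range_subset_range.mpr h))

theorem hd_add (a b : ℕ) (X Y : ℕ → α) :
    hd (a + b) X Y = hd a X Y + hd b (fun t => X (a + t)) (fun t => Y (a + t)) := by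
  simp only [hd_eq_sum, Finset.sum_range_add]

theorem hd_shift_le (a b : ℕ) (X Y : ℕ → α) :
    hd b (fun t => X (a + t)) (fun t => Y (a + t)) ≤ hd (a + b) X Y := by
  rw [hd_add]
  exact Nat.le_add_left _ _

theorem hd_shift_self_le (d L : ℕ) (S Y : ℕ → α) :
    hd L (fun t => Y (d + t)) Y ≤ hd (d + L) S Y + hd L (fun t => S (d + t)) Y :=
  calc hd L (fun t => Y (d + t)) Y
      ≤ hd L (fun t => Y (d + t)) (fun t => S (d + t)) + hd L (fun t => S (d + t)) Y :=
        hd_triangle _ _ _ _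
    _ ≤ hd (d + L) S Y + hd L (fun t => S (d + t)) Y := by
        rw [hd_comm L (fun t => Y (d + t))]
        gcongr
        exact hd_shift_le _ _ _ _

theorem hd_add_le_of_periodic {Y : ℕ → α} {d : ℕ} (hY : Periodic Y d) {m : ℕ} (hdm : d ≤ m)
    (X : ℕ → α) : hd (m + d) X Y ≤ hd m X Y + hd m (fun t => X (d + t)) Y := by
  rw [hd_add]
  gcongr
  obtain ⟨c, rfl⟩ := Nat.exists_eq_add_of_le hdm
  have hX : (fun t => X (d + c + t)) = fun t => X (d + (c + t)) := by
    simp only [add_assoc]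
  have hY' : (fun t => Y (d + c + t)) = fun t => Y (c + t) := by
    funext t
    rw [add_assoc, add_comm d, hY]
  rw [hX, hY', add_comm d c]
  exact hd_shift_le c d (fun t => X (d + t)) Y

end Hamming

section Periodicity

variable {α : Type*}

def infPow (q : ℕ) (Q : ℕ → α) : ℕ → α := fun i => Q (i % q)

theorem infPow_periodic (q : ℕ) (Q : ℕ → α) : Periodic (infPow q Q) q :=
  fun i => by simp only [infPow, Nat.add_mod_right]

theorem infPow_periodic_of_dvd {q d : ℕ} (Q : ℕ → α) (h : q ∣ d) : Periodic (infPow q Q) d := by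
  obtain ⟨c, rfl⟩ := h
  simpa [mul_comm] using (infPow_periodic q Q).nat_mul c

theorem HDstar_eq_hd [DecidableEq α] (len q : ℕ) (S Q : ℕ → α) :
    HDstar len q S Q = hd len S (infPow q Q) := rfl

theorem Primitive.not_periodic {q : ℕ} {Q : ℕ → α} (hprim : Primitive q Q) {g : ℕ}
    (hg : 0 < g) (hgq : g < q) (hgdvd : g ∣ q) : ¬ Periodic (infPow q Q) g := by
  intro hper
  obtain ⟨c, rfl⟩ := hgdvd
  refine hprim ⟨g, c, ?_, mul_comm g c, fun i hi => ?_⟩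
  · by_contra hc
    interval_cases c <;> simp_all
  · have := hper.map_mod_nat i
    simp only [infPow, Nat.mod_eq_of_lt hi,
      Nat.mod_eq_of_lt ((Nat.mod_lt i hg).trans hgq)] at this
    exact this.symm

/-- By Bézout, `gcd d q ≡ a * d [MOD q]` for some `a`, so `gcd d q` is a period as well. -/
theorem Primitive.dvd_of_periodic {q : ℕ} {Q : ℕ → α} (hprim : Primitive q Q) (hq : 0 < q)
    {d : ℕ} (hd : Periodic (infPow q Q) d) : q ∣ d := by
  by_contra hnd
  have hgq : Nat.gcd d q < q :=
    lt_of_le_of_ne (Nat.gcd_le_right d hq) fun h => hnd (h ▸ Nat.gcd_dvd_left d q)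
  obtain ⟨a, -, ha⟩ := Nat.exists_mul_mod_eq_gcd hgq
  refine hprim.not_periodic (Nat.gcd_pos_of_pos_right d hq) hgq (Nat.gcd_dvd_right d q)
    fun x => ?_
  calc infPow q Q (x + Nat.gcd d q) = infPow q Q (x + a * d) := by
        simp only [infPow, ← ha, Nat.add_mod_mod, mul_comm a d]
    _ = infPow q Q x := hd.nat_mul a x

theorem Primitive.div_le_hd_shift [DecidableEq α] {q : ℕ} {Q : ℕ → α} (hprim : Primitive q Q)
    (hq : 0 < q) {d : ℕ} (hnd : ¬ q ∣ d) (L : ℕ) :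
    L / q ≤ hd L (fun t => infPow q Q (d + t)) (infPow q Q) := by
  have hper := infPow_periodic q Q
  obtain ⟨j, hj⟩ : ∃ j, infPow q Q (j + d) ≠ infPow q Q j := by
    by_contra! h
    exact hnd (hprim.dvd_of_periodic hq h)
  have hj' : infPow q Q (d + j % q) ≠ infPow q Q (j % q) := by
    rwa [← hper.map_mod_nat (j % q), Nat.mod_mod, ← hper.map_mod_nat, Nat.add_mod_mod,
      add_comm, hper.map_mod_nat, hper.map_mod_nat]
  -- the mismatch at `j % q` recurs with period `q`
  calc L / q = (Finset.range (L / q)).card := (Finset.card_range _).symm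
    _ ≤ hd L (fun t => infPow q Q (d + t)) (infPow q Q) := by
      refine Finset.card_le_card_of_injOn (fun c => j % q + c * q) (fun c hc => ?_)
        fun x _ y _ hxy => Nat.eq_of_mul_eq_mul_right hq (Nat.add_left_cancel hxy)
      simp only [Finset.coe_range, Set.mem_Iio, Finset.coe_filter, Finset.mem_range,
        Set.mem_ofPred_eq] at hc ⊢
      refine ⟨?_, ?_⟩
      · have := Nat.mod_lt j hq
        have := Nat.div_mul_le_self L q
        nlinarith
      · have hcq := infPow_periodic_of_dvd Q (dvd_mul_left q c)
        rwa [← add_assoc, hcq, hcq]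

theorem Primitive.dvd_of_hd_lt [DecidableEq α] {q : ℕ} {Q : ℕ → α} (hprim : Primitive q Q)
    (hq : 0 < q) {d L : ℕ} (S : ℕ → α)
    (h : hd (d + L) S (infPow q Q) + hd L (fun t => S (d + t)) (infPow q Q) < L / q) :
    q ∣ d := by
  by_contra hnd
  exact (hprim.div_le_hd_shift hq hnd L).not_gt (lt_of_le_of_lt (hd_shift_self_le d L S _) h)

end Periodicity

section Occurrences

variable {α : Type*} [DecidableEq α] {k m n i : ℕ} {P T : ℕ → α}

theorem mem_OccF : i ∈ OccF k m n P T ↔ i ≤ n - m ∧ hd m P (fun t => T (i + t)) ≤ k := by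
  simp [OccF]

theorem hd_le_of_mem_OccF (h : i ∈ OccF k m n P T) (Y : ℕ → α) :
    hd m (fun t => T (i + t)) Y ≤ k + hd m P Y := by
  have := hd_triangle m (fun t => T (i + t)) P Y
  rw [hd_comm m _ P] at this
  have := (mem_OccF.1 h).2
  omega

end Occurrences

theorem stmt_13_general {α : Type*} [DecidableEq α] (m n k q : ℕ)
    (hn : 2 * n ≤ 3 * m)
    (P T Q : ℕ → α)
    (hq : 1 ≤ q) (hqk : 128 * k * q ≤ m) (hprim : Primitive q Q)
    (hPQ : HDstar m q P Q < 2 * k)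
    (hne : (OccF k m n P T).Nonempty) :
    HDstar (m + (OccF k m n P T).max' hne - (OccF k m n P T).min' hne) q
        (fun t => T ((OccF k m n P T).min' hne + t)) Q < 6 * k
    ∧ ∀ i ∈ OccF k m (m + (OccF k m n P T).max' hne - (OccF k m n P T).min' hne) P
        (fun t => T ((OccF k m n P T).min' hne + t)), q ∣ i := by
  set S := OccF k m n P T
  set i₀ := S.min' hne
  have hi₀ : i₀ ∈ S := S.min'_mem hne
  have hi₁ : S.max' hne ∈ S := S.max'_mem hne
  obtain ⟨d, hmax⟩ : ∃ d, S.max' hne = i₀ + d := Nat.exists_eq_add_of_le (S.min'_le _ hi₁)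
  have hdm : 2 * d ≤ m := by have := (mem_OccF.1 hi₁).1; omega
  rw [show m + S.max' hne - i₀ = m + d by omega]
  rw [HDstar_eq_hd] at hPQ ⊢
  set T₀ := fun t => T (i₀ + t)
  have hT₀ : hd m T₀ (infPow q Q) < 3 * k :=
    (hd_le_of_mem_OccF hi₀ (infPow q Q)).trans_lt (by omega)
  have hT₁ : hd m (fun t => T₀ (d + t)) (infPow q Q) < 3 * k := by
    have := hd_le_of_mem_OccF hi₁ (infPow q Q)
    simp only [hmax, add_assoc] at this
    exact this.trans_lt (by omega)
  have hdq : q ∣ d := by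
    refine hprim.dvd_of_hd_lt hq T₀ (L := m - d) ?_
    have := hd_mono (Nat.sub_le m d) (fun t => T₀ (d + t)) (infPow q Q)
    have : 64 * k ≤ (m - d) / q :=
      (Nat.le_div_iff_mul_le hq).2 (by rw [mul_assoc] at hqk ⊢; omega)
    rw [Nat.add_sub_cancel' (by omega)]
    omega
  have hT' : hd (m + d) T₀ (infPow q Q) < 6 * k :=
    (hd_add_le_of_periodic (infPow_periodic_of_dvd Q hdq) (by omega) T₀).trans_lt (by omega)
  refine ⟨hT', fun i hi => ?_⟩
  obtain ⟨hid, -⟩ := mem_OccF.1 hi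
  refine hprim.dvd_of_hd_lt hq T₀ (L := m) ?_
  have := hd_mono (show i + m ≤ m + d by omega) T₀ (infPow q Q)
  have := hd_le_of_mem_OccF hi (infPow q Q)
  have : 128 * k ≤ m / q := (Nat.le_div_iff_mul_le hq).2 hqk
  omega

/-- for `m ≤ n ≤ (3/2)m`, `1 ≤ k ≤ m`, `Occ_k(P,T) ≠ ∅`, and a primitive
string `Q` with `1 ≤ |Q| ≤ m/(128k)` and `HD(P,Q^*) < 2k`, the fragment
`T' := T[min Occ_k(P,T) .. m + max Occ_k(P,T))` satisfies `HD(T',Q^*) < 6k`, and every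
position in `Occ_k(P,T')` is a multiple of `|Q|`. -/
theorem stmt_13 {α : Type*} [DecidableEq α] (m n k q : ℕ)
    (hmn : m ≤ n) (hn : 2 * n ≤ 3 * m) (hk1 : 1 ≤ k) (hkm : k ≤ m)
    (P T Q : ℕ → α)
    (hq : 1 ≤ q) (hqk : 128 * k * q ≤ m) (hprim : Primitive q Q)
    (hPQ : HDstar m q P Q < 2 * k)
    (hne : (OccF k m n P T).Nonempty) :
    HDstar (m + (OccF k m n P T).max' hne - (OccF k m n P T).min' hne) q
        (fun t => T ((OccF k m n P T).min' hne + t)) Q < 6 * k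
    ∧ ∀ i ∈ OccF k m (m + (OccF k m n P T).max' hne - (OccF k m n P T).min' hne) P
        (fun t => T ((OccF k m n P T).min' hne + t)), q ∣ i :=
  stmt_13_general m n k q hn P T Q hq hqk hprim hPQ hne
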